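/- arXiv:0801.0507 — 8 statements merged into one kernel-verified Lean document; each statement's English description precedes it below -/
import Mathlib

section
/- Let (D, [1]) be a triangulated category and let L →u M →v Y →z L[1] and L' →u' M' →v' Y' →z' L'[1] be two distinguished triangles such that Hom(L', Y) = Hom(L, Y') = Hom(L, Y'[-1]) = 0. Then every morphism g : M → M' extends uniquely to a morphism of triangles (f, g, h). -/
/-!
Since `Hom(L, Y') = 0`, the map `u ≫ g` factors through `u'`, giving `f`, and the axiom TR3
then completes `(f, g)` to a morphism of triangles. For uniqueness, two choices of `f` differ by
a map killed by `u'`, hence factoring through `Y'[-1] ⟶ L'`; two choices of `h` differ by a map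
killed by `v`, hence factoring through `z : Y ⟶ L[1]`. Both `Hom(L, Y'[-1])` and
`Hom(L[1], Y') ≃ Hom(L, Y'[-1])` vanish.
-/

open CategoryTheory CategoryTheory.Limits CategoryTheory.Pretriangulated

namespace CategoryTheory

lemma shift_hom_eq_zero_of_hom_shift_eq_zero {C A : Type*} [Category C] [HasZeroMorphisms C]
    [AddGroup A] [HasShift C A] {X Y : C} (a b : A) (hab : a + b = 0)
    (h : ∀ ψ : X ⟶ Y⟦b⟧, ψ = 0) (φ : X⟦a⟧ ⟶ Y) : φ = 0 :=
  ((shiftEquiv' C a b hab).toAdjunction.homEquiv X Y).injective ((h _).trans (h _).symm)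

namespace Pretriangulated

variable {C : Type*} [Category C] [Preadditive C] [HasZeroObject C] [HasShift C ℤ]
  [∀ n : ℤ, (CategoryTheory.shiftFunctor C n).Additive] [Pretriangulated C]

lemma Triangle.exists_comp_mor₁_eq (T : Triangle C) (hT : T ∈ distTriang C)
    {X : C} (h : ∀ φ : X ⟶ T.obj₃, φ = 0) (a : X ⟶ T.obj₂) :
    ∃ f : X ⟶ T.obj₁, f ≫ T.mor₁ = a := by
  obtain ⟨f, hf⟩ := T.coyoneda_exact₂ hT a (h _)
  exact ⟨f, hf.symm⟩

lemma Triangle.eq_of_comp_mor₁_eq (T : Triangle C) (hT : T ∈ distTriang C)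
    {X : C} (h : ∀ φ : X ⟶ T.obj₃⟦(-1 : ℤ)⟧, φ = 0)
    {f₁ f₂ : X ⟶ T.obj₁} (hf : f₁ ≫ T.mor₁ = f₂ ≫ T.mor₁) : f₁ = f₂ := by
  have hf₀ : (f₁ - f₂) ≫ T.mor₁ = 0 := by rw [Preadditive.sub_comp, hf, sub_self]
  obtain ⟨φ, hφ⟩ :=
    T.invRotate.coyoneda_exact₂ (inv_rot_of_distTriang _ hT) (f₁ - f₂) hf₀
  rw [h φ] at hφ
  exact sub_eq_zero.mp (hφ.trans zero_comp)

lemma Triangle.eq_of_mor₂_comp_eq (T : Triangle C) (hT : T ∈ distTriang C)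
    {Y : C} (h : ∀ φ : T.obj₁⟦(1 : ℤ)⟧ ⟶ Y, φ = 0)
    {h₁ h₂ : T.obj₃ ⟶ Y} (hh : T.mor₂ ≫ h₁ = T.mor₂ ≫ h₂) : h₁ = h₂ := by
  have hh₀ : T.mor₂ ≫ (h₁ - h₂) = 0 := by rw [Preadditive.comp_sub, hh, sub_self]
  obtain ⟨φ, hφ⟩ := T.yoneda_exact₃ hT (h₁ - h₂) hh₀
  rw [h φ] at hφ
  exact sub_eq_zero.mp (hφ.trans comp_zero)

end Pretriangulated

end CategoryTheory

theorem stmt_5 {D : Type*} [Category D] [Preadditive D] [HasZeroObject D]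
    [HasShift D ℤ] [∀ n : ℤ, (shiftFunctor D n).Additive] [Pretriangulated D]
    {L M Y L' M' Y' : D}
    (u : L ⟶ M) (v : M ⟶ Y) (z : Y ⟶ L⟦(1 : ℤ)⟧)
    (u' : L' ⟶ M') (v' : M' ⟶ Y') (z' : Y' ⟶ L'⟦(1 : ℤ)⟧)
    (hT : Triangle.mk u v z ∈ distTriang D)
    (hT' : Triangle.mk u' v' z' ∈ distTriang D)
    (h1 : ∀ φ : L' ⟶ Y, φ = 0)
    (h2 : ∀ φ : L ⟶ Y', φ = 0)
    (h3 : ∀ φ : L ⟶ Y'⟦(-1 : ℤ)⟧, φ = 0)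
    (g : M ⟶ M') :
    ∃! fh : (L ⟶ L') × (Y ⟶ Y'),
      fh.1 ≫ u' = u ≫ g ∧ v ≫ fh.2 = g ≫ v' ∧
        fh.2 ≫ z' = z ≫ (shiftFunctor D (1 : ℤ)).map fh.1 := by
  obtain ⟨f, hf⟩ := Triangle.exists_comp_mor₁_eq _ hT' h2 (u ≫ g)
  obtain ⟨h, hvh, hzh⟩ :=
    complete_distinguished_triangle_morphism _ _ hT hT' f g hf.symm
  refine ⟨(f, h), ⟨hf, hvh, hzh.symm⟩, ?_⟩
  rintro ⟨f₂, h₂⟩ ⟨hf₂, hvh₂, -⟩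
  have hL : ∀ φ : L⟦(1 : ℤ)⟧ ⟶ Y', φ = 0 :=
    shift_hom_eq_zero_of_hom_shift_eq_zero 1 (-1) (by norm_num) h3
  ext
  · exact Triangle.eq_of_comp_mor₁_eq _ hT' h3 (hf₂.trans hf.symm)
  · exact Triangle.eq_of_mor₂_comp_eq _ hT hL (hvh₂.trans hvh.symm)
end

section
/- Let (X, Y, Z) be a triangulated TTF triple on a triangulated category D. Then the following are equivalent: (1) the t-structure (X, Y) splits (every torsion triangle splits, i.e., X τ_X M → M is a section for every M); (2) the t-structure (Y, Z) splits; (3) X = Z. -/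
open CategoryTheory CategoryTheory.Limits CategoryTheory.Pretriangulated

/-- A t-structure on a triangulated category, given by a pair of strictly full
subcategories `(X, Y)` with `Hom(X, Y) = 0`, `X` closed under `[1]`, `Y` closed
under `[-1]`, and every object sitting in a distinguished triangle with first
vertex in `X` and third vertex in `Y`. -/
def IsTStructureOn {D : Type*} [Category D] [Preadditive D] [HasZeroObject D]
    [HasShift D ℤ] [∀ n : ℤ, (shiftFunctor D n).Additive] [Pretriangulated D]
    (X Y : D → Prop) : Prop :=
  (∀ {A B : D}, (A ≅ B) → X A → X B) ∧
  (∀ {A B : D}, (A ≅ B) → Y A → Y B) ∧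
  (∀ {A B : D}, X A → Y B → ∀ f : A ⟶ B, f = 0) ∧
  (∀ {A : D}, X A → X (A⟦(1 : ℤ)⟧)) ∧
  (∀ {A : D}, Y A → Y (A⟦(-1 : ℤ)⟧)) ∧
  (∀ M : D, ∃ (A B : D) (f : A ⟶ M) (g : M ⟶ B) (h : B ⟶ A⟦(1 : ℤ)⟧),
    X A ∧ Y B ∧ Triangle.mk f g h ∈ distTriang D)

/-- The t-structure `(X, Y)` splits: for each object `M` the torsion triangle
`A → M → B → A[1]` (with `A ∈ X`, `B ∈ Y`) splits; equivalently its first map is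
a section. -/
def TStructureSplits {D : Type*} [Category D] [Preadditive D] [HasZeroObject D]
    [HasShift D ℤ] [∀ n : ℤ, (shiftFunctor D n).Additive] [Pretriangulated D]
    (X Y : D → Prop) : Prop :=
  ∀ M : D, ∃ (A B : D) (f : A ⟶ M) (g : M ⟶ B) (h : B ⟶ A⟦(1 : ℤ)⟧),
    X A ∧ Y B ∧ (Triangle.mk f g h ∈ distTriang D) ∧ ∃ r : M ⟶ A, f ≫ r = 𝟙 A

/-!
A t-structure `(U, V)` splits iff `Hom(V, U[1]) = 0`. For the nontrivial direction, compare a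
triangle `A → N → B → A[1]` with `A ∈ U`, `B ∈ V` to the split torsion triangle
`A₀ → N → B₀ → A₀[1]` of `N`: orthogonality makes `B` a retract of `B₀`, so `N → B` has a section.

In a TTF triple `(X, Y, Z)` the class `Y` is stable under `[1]` and `[-1]`, `X = ⊥Y` and `Z = Y⊥`.
If `(X, Y)` splits, `Hom(Y, X[1]) = 0` gives `Hom(Y, X) = 0`, i.e. `X ⊆ Z`, and for `M ∈ Z` the
summand `τ^Y M` lies in `Y ∩ Z = 0`, so `M ∈ X`; the case of `(Y, Z)` is dual. Conversely `X = Z`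
gives `Hom(Y, X[1]) ⊆ Hom(Y, Z) = 0` and `Hom(Z, Y[1]) ⊆ Hom(X, Y) = 0`.
-/

section

variable {D : Type*} [Category D] [Preadditive D] [HasZeroObject D]
    [HasShift D ℤ] [∀ n : ℤ, (shiftFunctor D n).Additive] [Pretriangulated D]

lemma exists_retraction_mor₁_of_mor₃_eq_zero {T : Triangle D} (hT : T ∈ distTriang D)
    (h : T.mor₃ = 0) : ∃ r : T.obj₂ ⟶ T.obj₁, T.mor₁ ≫ r = 𝟙 T.obj₁ := by
  obtain ⟨r, hr⟩ := Triangle.yoneda_exact₂ _ (inv_rot_of_distTriang _ hT) (𝟙 T.obj₁)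
    (by simp [h]; exact Limits.zero_comp)
  exact ⟨r, hr.symm⟩

namespace IsTStructureOn

variable {U V : D → Prop} (hUV : IsTStructureOn U V)
include hUV

lemma left_of_iso {A B : D} (e : A ≅ B) (hA : U A) : U B := hUV.1 e hA

lemma right_of_iso {A B : D} (e : A ≅ B) (hA : V A) : V B := hUV.2.1 e hA

lemma hom_eq_zero {A B : D} (hA : U A) (hB : V B) (f : A ⟶ B) : f = 0 := hUV.2.2.1 hA hB f

lemma left_shift {A : D} (hA : U A) : U (A⟦(1 : ℤ)⟧) := hUV.2.2.2.1 hA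

lemma right_shift {B : D} (hB : V B) : V (B⟦(-1 : ℤ)⟧) := hUV.2.2.2.2.1 hB

lemma exists_distTriang (M : D) :
    ∃ (A B : D) (f : A ⟶ M) (g : M ⟶ B) (h : B ⟶ A⟦(1 : ℤ)⟧),
      U A ∧ V B ∧ Triangle.mk f g h ∈ distTriang D :=
  hUV.2.2.2.2.2 M

lemma left_of_forall_hom_eq_zero {M : D} (hM : ∀ B, V B → ∀ g : M ⟶ B, g = 0) : U M := by
  obtain ⟨A, B, f, g, h, hA, hB, hT⟩ := hUV.exists_distTriang M
  obtain ⟨r, hr⟩ : ∃ r : A⟦(1 : ℤ)⟧ ⟶ B, 𝟙 B = h ≫ r :=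
    Triangle.yoneda_exact₃ _ hT (𝟙 B) (by rw [hM B hB g]; exact zero_comp)
  have hB0 : IsZero B := by
    rw [IsZero.iff_id_eq_zero, hr, hUV.hom_eq_zero (hUV.left_shift hA) hB r, comp_zero]
  have : IsIso f := (Triangle.isZero₃_iff_isIso₁ _ hT).1 hB0
  exact hUV.left_of_iso (asIso f) hA

lemma right_of_forall_hom_eq_zero {M : D} (hM : ∀ A, U A → ∀ f : A ⟶ M, f = 0) : V M := by
  obtain ⟨A, B, f, g, h, hA, hB, hT⟩ := hUV.exists_distTriang M
  obtain ⟨s, hs⟩ : ∃ s : A ⟶ B⟦(-1 : ℤ)⟧, 𝟙 A = s ≫ _ :=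
    Triangle.coyoneda_exact₂ _ (inv_rot_of_distTriang _ hT) (𝟙 A)
      (by rw [Triangle.invRotate_mor₂, hM A hA f]; exact comp_zero)
  have hA0 : IsZero A := by
    rw [IsZero.iff_id_eq_zero, hs, hUV.hom_eq_zero hA (hUV.right_shift hB) s]
    exact zero_comp
  have : IsIso g := (Triangle.isZero₁_iff_isIso₂ _ hT).1 hA0
  exact hUV.right_of_iso (asIso g).symm hB

lemma mor₃_eq_zero_of_splits (hsp : TStructureSplits U V) {A N B : D} {f : A ⟶ N} {g : N ⟶ B}
    {h : B ⟶ A⟦(1 : ℤ)⟧} (hT : Triangle.mk f g h ∈ distTriang D) (hA : U A) (hB : V B) :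
    h = 0 := by
  obtain ⟨A₀, B₀, f₀, g₀, h₀, hA₀, hB₀, hT₀, r₀, hr₀⟩ := hsp N
  have h₀_eq_zero : h₀ = 0 := Triangle.mor₃_eq_zero_of_mono₁ _ hT₀ (SplitMono.mono ⟨r₀, hr₀⟩)
  obtain ⟨σ₀, hσ₀⟩ : ∃ σ₀ : B₀ ⟶ N, 𝟙 B₀ = σ₀ ≫ g₀ :=
    Triangle.coyoneda_exact₃ _ hT₀ (𝟙 B₀) (by rw [h₀_eq_zero]; exact comp_zero)
  obtain ⟨β, hβ⟩ : ∃ β : B ⟶ B₀, g₀ = g ≫ β :=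
    Triangle.yoneda_exact₂ _ hT g₀ (hUV.hom_eq_zero hA hB₀ _)
  obtain ⟨γ, hγ⟩ : ∃ γ : B₀ ⟶ B, g = g₀ ≫ γ :=
    Triangle.yoneda_exact₂ _ hT₀ g (hUV.hom_eq_zero hA₀ hB _)
  obtain ⟨δ, hδ⟩ : ∃ δ : A⟦(1 : ℤ)⟧ ⟶ B, β ≫ γ - 𝟙 B = h ≫ δ :=
    Triangle.yoneda_exact₃ _ hT _ (show g ≫ (β ≫ γ - 𝟙 B) = 0 by
      rw [Preadditive.comp_sub, ← Category.assoc, ← hβ, ← hγ, Category.comp_id, sub_self])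
  have hβγ : β ≫ γ = 𝟙 B := by
    rw [← sub_eq_zero, hδ, hUV.hom_eq_zero (hUV.left_shift hA) hB δ, comp_zero]
  have hg : SplitEpi g :=
    ⟨β ≫ σ₀, by rw [Category.assoc, hγ, ← Category.assoc σ₀, ← hσ₀, Category.id_comp, hβγ]⟩
  exact Triangle.mor₃_eq_zero_of_epi₂ _ hT hg.epi

lemma hom_shift_eq_zero_of_splits (hsp : TStructureSplits U V) {A B : D} (hA : U A) (hB : V B)
    (t : B ⟶ A⟦(1 : ℤ)⟧) : t = 0 := by
  obtain ⟨N, f, g, hT⟩ := distinguished_cocone_triangle₂ t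
  exact hUV.mor₃_eq_zero_of_splits hsp hT hA hB

lemma splits_of_forall_hom_shift_eq_zero
    (hzero : ∀ A B, U A → V B → ∀ t : B ⟶ A⟦(1 : ℤ)⟧, t = 0) : TStructureSplits U V := by
  intro M
  obtain ⟨A, B, f, g, h, hA, hB, hT⟩ := hUV.exists_distTriang M
  obtain ⟨r, hr⟩ := exists_retraction_mor₁_of_mor₃_eq_zero hT (hzero A B hA hB h)
  exact ⟨A, B, f, g, h, hA, hB, hT, r, hr⟩

lemma left_of_splits (hsp : TStructureSplits U V) {M : D}
    (hM : ∀ B, V B → ∀ g : B ⟶ M, g = 0) : U M := by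
  obtain ⟨A, B, f, g, h, hA, hB, hT, r, hr⟩ := hsp M
  obtain ⟨σ, hσ⟩ : ∃ σ : B ⟶ M, 𝟙 B = σ ≫ g :=
    Triangle.coyoneda_exact₃ _ hT (𝟙 B) (by
      rw [Triangle.mor₃_eq_zero_of_mono₁ _ hT (SplitMono.mono ⟨r, hr⟩)]; exact comp_zero)
  have hB0 : IsZero B := by rw [IsZero.iff_id_eq_zero, hσ, hM B hB σ, zero_comp]
  have : IsIso f := (Triangle.isZero₃_iff_isIso₁ _ hT).1 hB0
  exact hUV.left_of_iso (asIso f) hA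

lemma right_of_splits (hsp : TStructureSplits U V) {M : D}
    (hM : ∀ A, U A → ∀ r : M ⟶ A, r = 0) : V M := by
  obtain ⟨A, B, f, g, h, hA, hB, hT, r, hr⟩ := hsp M
  have hA0 : IsZero A := by rw [IsZero.iff_id_eq_zero, ← hr, hM A hA r, comp_zero]
  have : IsIso g := (Triangle.isZero₁_iff_isIso₂ _ hT).1 hA0
  exact hUV.right_of_iso (asIso g).symm hB

end IsTStructureOn

section TTFTriple

variable {X Y Z : D → Prop} (hXY : IsTStructureOn X Y) (hYZ : IsTStructureOn Y Z)
include hXY hYZ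

lemma tStructureSplits_left_iff : TStructureSplits X Y ↔ ∀ M, X M ↔ Z M := by
  refine ⟨fun hsp M => ⟨fun hM => ?_, fun hM => ?_⟩, fun hXZ => ?_⟩
  · refine hYZ.right_of_forall_hom_eq_zero fun B hB f => ?_
    exact (shiftFunctor D (1 : ℤ)).map_eq_zero_iff.1
      (hXY.hom_shift_eq_zero_of_splits hsp hM (hYZ.left_shift hB) _)
  · exact hXY.left_of_splits hsp fun B hB g => hYZ.hom_eq_zero hB hM g
  · exact hXY.splits_of_forall_hom_shift_eq_zero fun A B hA hB t =>
      hYZ.hom_eq_zero hB ((hXZ _).1 (hXY.left_shift hA)) t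

lemma tStructureSplits_right_iff : TStructureSplits Y Z ↔ ∀ M, X M ↔ Z M := by
  refine ⟨fun hsp M => ⟨fun hM => ?_, fun hM => ?_⟩, fun hXZ => ?_⟩
  · exact hYZ.right_of_splits hsp fun B hB r => hXY.hom_eq_zero hM hB r
  · refine hXY.left_of_forall_hom_eq_zero fun B hB g => ?_
    have hg := hYZ.hom_shift_eq_zero_of_splits hsp (hXY.right_shift hB) hM
      (g ≫ (shiftNegShift B (1 : ℤ)).inv)
    exact (cancel_mono (shiftNegShift B (1 : ℤ)).inv).1 (hg.trans zero_comp.symm)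
  · exact hYZ.splits_of_forall_hom_shift_eq_zero fun B C hB hC t =>
      hXY.hom_eq_zero ((hXZ C).2 hC) (hYZ.left_shift hB) t

end TTFTriple

end

theorem stmt_8 {D : Type*} [Category D] [Preadditive D] [HasZeroObject D]
    [HasShift D ℤ] [∀ n : ℤ, (shiftFunctor D n).Additive] [Pretriangulated D]
    (X Y Z : D → Prop)
    (hXY : IsTStructureOn X Y) (hYZ : IsTStructureOn Y Z) :
    (TStructureSplits X Y ↔ TStructureSplits Y Z) ∧
    (TStructureSplits X Y ↔ ∀ M : D, X M ↔ Z M) :=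
  ⟨(tStructureSplits_left_iff hXY hYZ).trans (tStructureSplits_right_iff hXY hYZ).symm,
    tStructureSplits_left_iff hXY hYZ⟩
end

section
/- Let D be a triangulated category and let (L_i →f_i M_i →g_i N_i →h_i L_i[1])_{i ∈ I} be a family of distinguished triangles. If the coproducts ∐ L_i and ∐ M_i exist in D, then the coproduct ∐ N_i exists and the induced sequence ∐L_i → ∐M_i → ∐N_i → ∐L_i[1] is a distinguished triangle. -/
open CategoryTheory CategoryTheory.Limits CategoryTheory.Pretriangulated

universe w v u

/-! Complete `∐ Lᵢ → ∐ Mᵢ` to a distinguished triangle `T'` with third object `Z`; the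
coprojections extend to morphisms of triangles `Tᵢ ⟶ T'`, and their third components make `Z` a
coproduct of the `Nᵢ`. This is a five-lemma argument with the exact sequences `Hom(-, W)`: a family
`Nᵢ ⟶ W` is first matched on `∐ Mᵢ` and descends to `Z` up to an error that factors, on each
`Nᵢ`, through `Lᵢ⟦1⟧`, hence globally through `(∐ Lᵢ)⟦1⟧` (the shift, an equivalence, preserves
coproducts). Uniqueness is the same argument one step further, using the rotated triangles. The
triangle `∐ Tᵢ` is then isomorphic to `T'`. -/

namespace CategoryTheory.Pretriangulated

variable {D : Type u} [Category.{v} D] [Preadditive D] [HasZeroObject D] [HasShift D ℤ]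
  [∀ n : ℤ, (shiftFunctor D n).Additive] [Pretriangulated D] {I : Type w}

section

variable {T : I → Triangle D} {T' : Triangle D} {φ : ∀ i, T i ⟶ T'}

lemma exists_desc_hom₃_of_isColimit (hT : ∀ i, T i ∈ distTriang D) (hT' : T' ∈ distTriang D)
    (h₁ : IsColimit (Cofan.mk T'.obj₁ fun i => (φ i).hom₁))
    (h₂ : IsColimit (Cofan.mk T'.obj₂ fun i => (φ i).hom₂))
    {W : D} (t : ∀ i, (T i).obj₃ ⟶ W) :
    ∃ d : T'.obj₃ ⟶ W, ∀ i, (φ i).hom₃ ≫ d = t i := by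
  let a : T'.obj₂ ⟶ W := Cofan.IsColimit.desc h₂ fun i => (T i).mor₂ ≫ t i
  have ha : ∀ i, (φ i).hom₂ ≫ a = (T i).mor₂ ≫ t i := Cofan.IsColimit.fac h₂ _
  have ha₀ : T'.mor₁ ≫ a = 0 := Cofan.IsColimit.hom_ext h₁ _ _ fun i => by
    change (φ i).hom₁ ≫ _ = (φ i).hom₁ ≫ _
    rw [← (φ i).comm₁_assoc, ha, comp_distTriang_mor_zero₁₂_assoc _ (hT i), zero_comp, comp_zero]
  obtain ⟨u, hu⟩ := Triangle.yoneda_exact₂ _ hT' a ha₀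
  have he : ∀ i, ∃ e, (φ i).hom₃ ≫ u - t i = (T i).mor₃ ≫ e := fun i =>
    Triangle.yoneda_exact₃ _ (hT i) _ (by
      rw [Preadditive.comp_sub, (φ i).comm₂_assoc, ← hu, ha, sub_self])
  choose e he using he
  have h₁' := isColimitCofanMkObjOfIsColimit (shiftFunctor D (1 : ℤ)) _ _ h₁
  have hb : ∀ i, (φ i).hom₁⟦(1 : ℤ)⟧' ≫ Cofan.IsColimit.desc h₁' e = e i :=
    Cofan.IsColimit.fac h₁' e
  refine ⟨u - T'.mor₃ ≫ Cofan.IsColimit.desc h₁' e, fun i => ?_⟩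
  rw [Preadditive.comp_sub, ← (φ i).comm₃_assoc, hb, ← he, sub_sub_cancel]

lemma hom₃_ext_of_isColimit (hT : ∀ i, T i ∈ distTriang D) (hT' : T' ∈ distTriang D)
    (h₁ : IsColimit (Cofan.mk T'.obj₁ fun i => (φ i).hom₁))
    (h₂ : IsColimit (Cofan.mk T'.obj₂ fun i => (φ i).hom₂))
    {W : D} (w : T'.obj₃ ⟶ W) (hw : ∀ i, (φ i).hom₃ ≫ w = 0) : w = 0 := by
  obtain ⟨b, rfl⟩ := Triangle.yoneda_exact₃ _ hT' w (Cofan.IsColimit.hom_ext h₂ _ _ fun i => by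
    change (φ i).hom₂ ≫ _ = (φ i).hom₂ ≫ _
    rw [← (φ i).comm₂_assoc, hw, comp_zero, comp_zero])
  have hd : ∀ i, ∃ d, (φ i).hom₁⟦(1 : ℤ)⟧' ≫ b = (-(T i).mor₁⟦(1 : ℤ)⟧') ≫ d := fun i =>
    Triangle.yoneda_exact₃ (Triangle.mk (T i).mor₂ (T i).mor₃ (-(T i).mor₁⟦(1 : ℤ)⟧'))
      (rot_of_distTriang _ (hT i)) _ (by
        change (T i).mor₃ ≫ _ = 0
        rw [(φ i).comm₃_assoc, hw])
  choose d hd using hd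
  have h₁' := isColimitCofanMkObjOfIsColimit (shiftFunctor D (1 : ℤ)) _ _ h₁
  have h₂' := isColimitCofanMkObjOfIsColimit (shiftFunctor D (1 : ℤ)) _ _ h₂
  have hc : ∀ i, (φ i).hom₂⟦(1 : ℤ)⟧' ≫ Cofan.IsColimit.desc h₂' (fun i => -d i) = -d i :=
    Cofan.IsColimit.fac h₂' _
  have hb : b = T'.mor₁⟦(1 : ℤ)⟧' ≫ Cofan.IsColimit.desc h₂' (fun i => -d i) :=
    Cofan.IsColimit.hom_ext h₁' _ _ fun i => by
      change (φ i).hom₁⟦(1 : ℤ)⟧' ≫ _ = (φ i).hom₁⟦(1 : ℤ)⟧' ≫ _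
      rw [hd, ← Functor.map_comp_assoc, ← (φ i).comm₁, Functor.map_comp_assoc, hc,
        Preadditive.neg_comp, Preadditive.comp_neg]
  rw [hb, comp_distTriang_mor_zero₃₁_assoc _ hT', zero_comp]

noncomputable def isColimitCofanHom₃ (hT : ∀ i, T i ∈ distTriang D) (hT' : T' ∈ distTriang D)
    (h₁ : IsColimit (Cofan.mk T'.obj₁ fun i => (φ i).hom₁))
    (h₂ : IsColimit (Cofan.mk T'.obj₂ fun i => (φ i).hom₂)) :
    IsColimit (Cofan.mk T'.obj₃ fun i => (φ i).hom₃) :=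
  Cofan.IsColimit.mk _ (fun c => (exists_desc_hom₃_of_isColimit hT hT' h₁ h₂ c.inj).choose)
    (fun c => (exists_desc_hom₃_of_isColimit hT hT' h₁ h₂ c.inj).choose_spec)
    (fun c m hm => sub_eq_zero.1 <| hom₃_ext_of_isColimit hT hT' h₁ h₂ _ fun i => by
      rw [Preadditive.comp_sub, (exists_desc_hom₃_of_isColimit hT hT' h₁ h₂ c.inj).choose_spec]
      exact sub_eq_zero.2 (hm i))

end

variable (T : I → Triangle D)

lemma exists_distinguished_isColimit_cofan₁₂ (hT : ∀ i, T i ∈ distTriang D)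
    [HasCoproduct fun i => (T i).obj₁] [HasCoproduct fun i => (T i).obj₂] :
    ∃ (T' : Triangle D) (φ : ∀ i, T i ⟶ T'), T' ∈ distTriang D ∧
      Nonempty (IsColimit (Cofan.mk T'.obj₁ fun i => (φ i).hom₁)) ∧
      Nonempty (IsColimit (Cofan.mk T'.obj₂ fun i => (φ i).hom₂)) := by
  obtain ⟨Z, z₂, z₃, hZ⟩ := distinguished_cocone_triangle (Limits.Sigma.map fun i => (T i).mor₁)
  have hι : ∀ i, (T i).mor₁ ≫ Limits.Sigma.ι (fun i => (T i).obj₂) i =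
      Limits.Sigma.ι (fun i => (T i).obj₁) i ≫ Limits.Sigma.map fun i => (T i).mor₁ :=
    fun i => (Limits.Sigma.ι_map (fun i => (T i).mor₁) i).symm
  choose c hc₂ hc₃ using fun i =>
    complete_distinguished_triangle_morphism _ _ (hT i) hZ _ _ (hι i)
  exact ⟨_, fun i => Triangle.homMk _ _ _ _ (c i) (hι i) (hc₂ i) (hc₃ i),
    hZ, ⟨coproductIsCoproduct _⟩, ⟨coproductIsCoproduct _⟩⟩

lemma hasCoproduct_obj₃ (hT : ∀ i, T i ∈ distTriang D)
    [HasCoproduct fun i => (T i).obj₁] [HasCoproduct fun i => (T i).obj₂] :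
    HasCoproduct fun i => (T i).obj₃ := by
  obtain ⟨T', φ, hT', ⟨h₁⟩, ⟨h₂⟩⟩ := exists_distinguished_isColimit_cofan₁₂ T hT
  exact ⟨_, isColimitCofanHom₃ hT hT' h₁ h₂⟩

variable [HasCoproduct fun i => (T i).obj₁] [HasCoproduct fun i => (T i).obj₂]
  [HasCoproduct fun i => (T i).obj₃]

/-- A reducible structure literal rather than `Triangle.mk`, so that its objects are reducibly the
coproducts and the `Sigma` simp lemmas apply to its morphisms. -/
noncomputable abbrev coproductTriangle : Triangle D where
  obj₁ := ∐ fun i => (T i).obj₁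
  obj₂ := ∐ fun i => (T i).obj₂
  obj₃ := ∐ fun i => (T i).obj₃
  mor₁ := Limits.Sigma.map fun i => (T i).mor₁
  mor₂ := Limits.Sigma.map fun i => (T i).mor₂
  mor₃ := Limits.Sigma.desc fun i =>
    (T i).mor₃ ≫ (Limits.Sigma.ι (fun i => (T i).obj₁) i)⟦(1 : ℤ)⟧'

noncomputable def coproductTriangle.desc {T' : Triangle D} (φ : ∀ i, T i ⟶ T') :
    coproductTriangle T ⟶ T' :=
  Triangle.homMk _ _ (Limits.Sigma.desc fun i => (φ i).hom₁)
    (Limits.Sigma.desc fun i => (φ i).hom₂) (Limits.Sigma.desc fun i => (φ i).hom₃)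
    (Limits.Sigma.hom_ext _ _ fun i => by simp)
    (Limits.Sigma.hom_ext _ _ fun i => by simp)
    (Limits.Sigma.hom_ext _ _ fun i => by simp [← Functor.map_comp])

lemma coproductTriangle_distinguished (hT : ∀ i, T i ∈ distTriang D) :
    coproductTriangle T ∈ distTriang D := by
  obtain ⟨T', φ, hT', ⟨h₁⟩, ⟨h₂⟩⟩ := exists_distinguished_isColimit_cofan₁₂ T hT
  have h₃ := isColimitCofanHom₃ hT hT' h₁ h₂
  have : IsIso (coproductTriangle.desc T φ) := Triangle.isIso_of_isIsos _
    ((Cofan.nonempty_isColimit_iff_isIso_sigmaDesc _).1 ⟨h₁⟩)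
    ((Cofan.nonempty_isColimit_iff_isIso_sigmaDesc _).1 ⟨h₂⟩)
    ((Cofan.nonempty_isColimit_iff_isIso_sigmaDesc _).1 ⟨h₃⟩)
  exact isomorphic_distinguished _ hT' _ (asIso (coproductTriangle.desc T φ))

end CategoryTheory.Pretriangulated

theorem stmt_10 {D : Type u} [Category.{v} D] [Preadditive D] [HasZeroObject D]
    [HasShift D ℤ] [∀ n : ℤ, (shiftFunctor D n).Additive] [Pretriangulated D]
    {I : Type w} {L M N : I → D}
    (f : ∀ i, L i ⟶ M i) (g : ∀ i, M i ⟶ N i) (h : ∀ i, N i ⟶ (L i)⟦(1 : ℤ)⟧)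
    (hT : ∀ i, Triangle.mk (f i) (g i) (h i) ∈ distTriang D)
    [HasCoproduct L] [HasCoproduct M] :
    HasCoproduct N ∧
      ∀ [HasCoproduct N],
        Triangle.mk (Limits.Sigma.map f) (Limits.Sigma.map g)
            (Limits.Sigma.desc fun i => h i ≫ (shiftFunctor D (1 : ℤ)).map (Limits.Sigma.ι L i)) ∈
          distTriang D := by
  let T i := Triangle.mk (f i) (g i) (h i)
  have : HasCoproduct fun i => (T i).obj₁ := ‹HasCoproduct L›
  have : HasCoproduct fun i => (T i).obj₂ := ‹HasCoproduct M›
  refine ⟨hasCoproduct_obj₃ T hT, ?_⟩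
  intro _
  have : HasCoproduct fun i => (T i).obj₃ := ‹HasCoproduct N›
  exact coproductTriangle_distinguished T hT
end

section
/- Let A be an abelian category and U a full subcategory closed under quotients and extensions. Then U is contravariantly finite in A (every object admits a U-precover) if and only if the inclusion functor U → A has a right adjoint, if and only if (U, U⟂) is a torsion pair on A. -/
open CategoryTheory CategoryTheory.Limits

universe v u

/-- Every object of `A` admits a `U`-precover: a morphism `UM ⟶ M` with
`UM ∈ U` through which every morphism from an object of `U` to `M` factors. -/
def HasUPrecovers {A : Type u} [Category.{v} A] (U : A → Prop) : Prop :=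
  ∀ M : A, ∃ (UM : A) (p : UM ⟶ M), U UM ∧
    ∀ (U' : A), U U' → ∀ f : U' ⟶ M, ∃ g : U' ⟶ UM, g ≫ p = f

/-- `(U, U⟂)` is a torsion pair: every object `M` sits in a short exact
sequence `0 → L → M → N → 0` with `L ∈ U` and `N ∈ U⟂` (orthogonality
`Hom(U, U⟂) = 0` holds by definition of `U⟂`). -/
def IsTorsionPairWithPerp {A : Type u} [Category.{v} A] [Abelian A] (U : A → Prop) : Prop :=
  ∀ M : A, ∃ (L N : A) (i : L ⟶ M) (p : M ⟶ N) (w : i ≫ p = 0),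
    U L ∧ (∀ u : A, U u → ∀ h : u ⟶ N, h = 0) ∧ (ShortComplex.mk i p w).ShortExact

/-!
A right adjoint to the inclusion of `U` is the same as a `U`-precover of every object that
factors maps uniquely. Given a torsion pair `(U, U⟂)`, the torsion part `L ↪ M` is such a
precover: a map from `U` into `M` dies in `M/L ∈ U⟂`, so it lifts, uniquely, to the kernel
`L`. Conversely, given a precover `p : UM ⟶ M`, its image `L` lies in `U` as a quotient of
`UM`, and `N := M/L` lies in `U⟂`: for `h : u ⟶ N` with `u ∈ U`, the pullback `E` of
`M ⟶ N` along `h` is an extension of `u` by `L`, hence in `U`, so `E ⟶ M` factors through `p`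
and `h` vanishes on the epimorphism `E ⟶ u`.
-/

namespace CategoryTheory

theorem Functor.isLeftAdjoint_of_existsUnique_factorization {C : Type*} {D : Type*}
    [Category C] [Category D] (G : C ⥤ D)
    (h : ∀ M : D, ∃ (L : C) (i : G.obj L ⟶ M),
      ∀ (X : C) (f : G.obj X ⟶ M), ∃! g : X ⟶ L, G.map g ≫ i = f) :
    G.IsLeftAdjoint := by
  have (M : D) : HasTerminal (CostructuredArrow G M) := by
    obtain ⟨L, i, hi⟩ := h M
    choose g hg hg_unique using hi
    refine IsTerminal.hasTerminal (X := CostructuredArrow.mk i) <|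
      IsTerminal.ofUniqueHom (fun X => CostructuredArrow.homMk (g X.left X.hom) (hg _ _))
        fun X m => ?_
    ext
    exact hg_unique _ _ _ (CostructuredArrow.w m)
  exact isLeftAdjoint_of_costructuredArrowTerminals G

theorem ShortComplex.ShortExact.baseChange {A : Type*} [Category A] [Abelian A]
    {S : ShortComplex A} (hS : S.ShortExact) {X : A} (f : X ⟶ S.X₃) :
    (ShortComplex.mk (pullback.lift 0 S.f (by rw [zero_comp, S.zero])) (pullback.fst f S.g)
      (pullback.lift_fst _ _ _)).ShortExact := by
  have := hS.mono_f
  have := hS.epi_g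
  set j : S.X₁ ⟶ pullback f S.g := pullback.lift 0 S.f (by rw [zero_comp, S.zero])
  have hj_snd : j ≫ pullback.snd f S.g = S.f := pullback.lift_snd _ _ _
  have : Mono j := mono_of_mono_fac hj_snd
  have hj_kernel : IsLimit (KernelFork.ofι j (pullback.lift_fst _ _ _)) := by
    refine KernelFork.IsLimit.ofι' j _ fun k hk =>
      ⟨hS.exact.lift (k ≫ pullback.snd f S.g) ?_, ?_⟩
    · rw [Category.assoc, ← pullback.condition, ← Category.assoc, hk, zero_comp]
    · apply pullback.hom_ext
      · rw [Category.assoc, pullback.lift_fst, comp_zero, hk]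
      · rw [Category.assoc, hj_snd, hS.exact.lift_f]
  exact ⟨ShortComplex.exact_of_f_is_kernel _ hj_kernel⟩

namespace ObjectProperty

variable {A : Type u} [Category.{v} A] (U : ObjectProperty A)

theorem hasUPrecovers_of_isLeftAdjoint [U.ι.IsLeftAdjoint] : HasUPrecovers U := by
  intro M
  let adj := Adjunction.ofIsLeftAdjoint U.ι
  refine ⟨(U.ι.rightAdjoint.obj M).obj, adj.counit.app M, (U.ι.rightAdjoint.obj M).property,
    fun X hX f => ⟨(adj.homEquiv ⟨X, hX⟩ M f).hom, ?_⟩⟩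
  exact (adj.homEquiv_counit _ _ _).symm.trans ((adj.homEquiv ⟨X, hX⟩ M).symm_apply_apply f)

variable [Abelian A]

theorem isLeftAdjoint_ι_of_isTorsionPairWithPerp (h : IsTorsionPairWithPerp U) :
    U.ι.IsLeftAdjoint := by
  refine U.ι.isLeftAdjoint_of_existsUnique_factorization fun M => ?_
  obtain ⟨L, N, i, p, w, hL, hN, hS⟩ := h M
  have := hS.mono_f
  refine ⟨⟨L, hL⟩, i, fun X f => ⟨homMk (hS.exact.lift f (hN _ X.property _)), ?_, ?_⟩⟩
  · exact hS.exact.lift_f _ _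
  · intro g hg
    ext
    rw [← cancel_mono i]
    exact hg.trans (hS.exact.lift_f _ _).symm

theorem rightOrthogonal_X₃_of_shortExact [U.IsClosedUnderExtensions] {S : ShortComplex A}
    (hS : S.ShortExact) (h₁ : U S.X₁)
    (hg : ∀ ⦃X : A⦄ (f : X ⟶ S.X₂), U X → f ≫ S.g = 0) :
    U.rightOrthogonal S.X₃ := by
  intro X h hX
  have := hS.epi_g
  have hE : U (pullback h S.g) := U.prop_X₂_of_shortExact (hS.baseChange h) h₁ hX
  rw [← cancel_epi (pullback.fst h S.g), pullback.condition, hg _ hE, comp_zero]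

theorem isTorsionPairWithPerp_of_hasUPrecovers [U.IsClosedUnderQuotients]
    [U.IsClosedUnderExtensions] (h : HasUPrecovers U) : IsTorsionPairWithPerp U := by
  intro M
  obtain ⟨UM, p, hUM, hp⟩ := h M
  let S := ShortComplex.mk (image.ι p) (cokernel.π (image.ι p)) (cokernel.condition _)
  have hS : S.ShortExact :=
    { exact := ShortComplex.exact_of_g_is_cokernel _ (cokernelIsCokernel _) }
  have hL : U (image p) := U.prop_of_epi (factorThruImage p) hUM
  have hN : U.rightOrthogonal S.X₃ := by
    refine U.rightOrthogonal_X₃_of_shortExact hS hL fun X f hX => ?_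
    obtain ⟨g, rfl⟩ := hp X hX f
    change (g ≫ p) ≫ S.g = 0
    rw [Category.assoc, ← image.fac p, Category.assoc, S.zero, comp_zero, comp_zero]
  exact ⟨_, _, _, _, _, hL, fun X hX f => hN f hX, hS⟩

end ObjectProperty

end CategoryTheory

theorem stmt_14 {A : Type u} [Category.{v} A] [Abelian A] (U : A → Prop)
    (hquot : ∀ {X Q : A} (p : X ⟶ Q), Epi p → U X → U Q)
    (hext : ∀ (S : ShortComplex A), S.ShortExact → U S.X₁ → U S.X₃ → U S.X₂) :
    (HasUPrecovers U ↔ (ObjectProperty.ι U).IsLeftAdjoint) ∧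
    (HasUPrecovers U ↔ IsTorsionPairWithPerp U) := by
  have : ObjectProperty.IsClosedUnderQuotients U := ⟨fun f hf hX => hquot f hf hX⟩
  have : ObjectProperty.IsClosedUnderExtensions U := ⟨fun hS h₁ h₃ => hext _ hS h₁ h₃⟩
  have torsion_of_precovers := ObjectProperty.isTorsionPairWithPerp_of_hasUPrecovers U
  have adjoint_of_torsion := ObjectProperty.isLeftAdjoint_ι_of_isTorsionPairWithPerp U
  have precovers_of_adjoint (h : (ObjectProperty.ι U).IsLeftAdjoint) : HasUPrecovers U :=
    ObjectProperty.hasUPrecovers_of_isLeftAdjoint U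
  exact ⟨⟨fun h => adjoint_of_torsion (torsion_of_precovers h), precovers_of_adjoint⟩,
    ⟨torsion_of_precovers, fun h => precovers_of_adjoint (adjoint_of_torsion h)⟩⟩
end

section
/- Let A be an abelian category, T a Serre class in A, and ⟨T⟩ the ideal of morphisms factoring through an object of T. For a morphism f : M → N in A, the image of f in the quotient category A/⟨T⟩ is a monomorphism if and only if ker(f) belongs to T; dually, the image of f is an epimorphism in A/⟨T⟩ if and only if coker(f) belongs to T. -/
/-!
A morphism `u` with `u ≫ f = a ≫ b` through `Z ∈ T` lifts to the pullback of `f` along `b`,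
which is an extension of a subobject of `Z` by `ker f`; so if `ker f ∈ T`, then `u` factors
through `T`, which is exactly what makes `f` a monomorphism in `A/⟨T⟩`. Conversely `kernel.ι f`
becomes zero in `A/⟨T⟩`, and a monomorphism factoring through `T` has its source in `T`.
The statement about epimorphisms is dual, with pushouts.
-/

open CategoryTheory CategoryTheory.Limits

/-- A morphism factors through an object of the class `T`. -/
def FactorsThruClass {A : Type*} [Category A] (T : A → Prop) {X Y : A} (f : X ⟶ Y) : Prop :=
  ∃ (Z : A) (a : X ⟶ Z) (b : Z ⟶ Y), T Z ∧ a ≫ b = f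

/-- The relation identifying two morphisms whose difference factors through an
object of `T`; the quotient by it is the stable category `A/⟨T⟩`. -/
def stableRel {A : Type*} [Category A] [Preadditive A] (T : A → Prop) : HomRel A :=
  fun {X Y} (f g : X ⟶ Y) => FactorsThruClass T (f - g)

open ZeroObject

namespace CategoryTheory.ObjectProperty

section

variable {A : Type*} [Category A] (P : ObjectProperty A)

lemma prop_of_mono_of_factorsThruClass [P.IsClosedUnderSubobjects] {X Y : A} (i : X ⟶ Y) [Mono i]
    (hi : FactorsThruClass P i) : P X := by
  obtain ⟨Z, a, b, hZ, rfl⟩ := hi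
  have : Mono a := mono_of_mono a b
  exact P.prop_of_mono a hZ

lemma prop_of_epi_of_factorsThruClass [P.IsClosedUnderQuotients] {X Y : A} (p : X ⟶ Y) [Epi p]
    (hp : FactorsThruClass P p) : P Y := by
  obtain ⟨Z, a, b, hZ, rfl⟩ := hp
  have : Epi b := epi_of_epi a b
  exact P.prop_of_epi b hZ

end

section Preadditive

variable {A : Type*} [Category A] [Preadditive A] (P : ObjectProperty A)

lemma factorsThruClass_zero [P.ContainsZero] {X Y : A} : FactorsThruClass P (0 : X ⟶ Y) := by
  obtain ⟨Z, -, hPZ⟩ := P.exists_prop_of_containsZero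
  exact ⟨Z, 0, 0, hPZ, zero_comp⟩

lemma factorsThruClass_add [HasZeroObject A] [HasBinaryBiproducts A] [P.IsClosedUnderExtensions]
    {X Y : A} {f g : X ⟶ Y} (hf : FactorsThruClass P f) (hg : FactorsThruClass P g) :
    FactorsThruClass P (f + g) := by
  obtain ⟨Z₁, a₁, b₁, hZ₁, rfl⟩ := hf
  obtain ⟨Z₂, a₂, b₂, hZ₂, rfl⟩ := hg
  exact ⟨Z₁ ⊞ Z₂, biprod.lift a₁ a₂, biprod.desc b₁ b₂, P.prop_biprod hZ₁ hZ₂,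
    biprod.lift_desc⟩

variable [HasZeroObject A] [HasBinaryBiproducts A] [P.ContainsZero] [P.IsClosedUnderExtensions]

instance congruence_stableRel : Congruence (stableRel P) where
  equivalence :=
    { refl f := by simpa only [stableRel, sub_self] using P.factorsThruClass_zero
      symm := by
        rintro f g ⟨Z, a, b, hZ, hab⟩
        exact ⟨Z, -a, b, hZ, by rw [Preadditive.neg_comp, hab, neg_sub]⟩
      trans hfg hgh := by
        simpa only [stableRel, sub_add_sub_cancel] using P.factorsThruClass_add hfg hgh }
  comp_left := by
    rintro X Y Z f g g' ⟨W, a, b, hW, hab⟩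
    exact ⟨W, f ≫ a, b, hW, by rw [Category.assoc, hab, Preadditive.comp_sub]⟩
  comp_right := by
    rintro X Y Z f f' g ⟨W, a, b, hW, hab⟩
    exact ⟨W, a, b ≫ g, hW, by rw [← Category.assoc, hab, Preadditive.sub_comp]⟩

lemma functor_map_eq_zero_iff {X Y : A} (f : X ⟶ Y) :
    (Quotient.functor (stableRel P)).map f = (Quotient.functor (stableRel P)).map 0 ↔
      FactorsThruClass P f := by
  rw [Quotient.functor_map_eq_iff, stableRel, sub_zero]

lemma mono_functor_map_iff {M N : A} (f : M ⟶ N) :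
    Mono ((Quotient.functor (stableRel P)).map f) ↔
      ∀ ⦃X : A⦄ (u : X ⟶ M), FactorsThruClass P (u ≫ f) → FactorsThruClass P u := by
  let Q := Quotient.functor (stableRel P)
  constructor
  · intro _ X u hu
    rw [← functor_map_eq_zero_iff, ← cancel_mono (Q.map f), ← Q.map_comp, ← Q.map_comp,
      zero_comp]
    exact (P.functor_map_eq_zero_iff _).2 hu
  · refine fun H ↦ ⟨fun {W} g h hgh ↦ ?_⟩
    obtain ⟨g, rfl⟩ := Q.map_surjective g
    obtain ⟨h, rfl⟩ := Q.map_surjective h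
    rw [← Q.map_comp, ← Q.map_comp, Quotient.functor_map_eq_iff] at hgh
    rw [Quotient.functor_map_eq_iff]
    exact H _ (by rwa [stableRel, ← Preadditive.sub_comp] at hgh)

lemma epi_functor_map_iff {M N : A} (f : M ⟶ N) :
    Epi ((Quotient.functor (stableRel P)).map f) ↔
      ∀ ⦃X : A⦄ (u : N ⟶ X), FactorsThruClass P (f ≫ u) → FactorsThruClass P u := by
  let Q := Quotient.functor (stableRel P)
  constructor
  · intro _ X u hu
    rw [← functor_map_eq_zero_iff, ← cancel_epi (Q.map f), ← Q.map_comp, ← Q.map_comp,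
      comp_zero]
    exact (P.functor_map_eq_zero_iff _).2 hu
  · refine fun H ↦ ⟨fun {W} g h hgh ↦ ?_⟩
    obtain ⟨g, rfl⟩ := Q.map_surjective g
    obtain ⟨h, rfl⟩ := Q.map_surjective h
    rw [← Q.map_comp, ← Q.map_comp, Quotient.functor_map_eq_iff] at hgh
    rw [Quotient.functor_map_eq_iff]
    exact H _ (by rwa [stableRel, ← Preadditive.comp_sub] at hgh)

end Preadditive

section Abelian

variable {A : Type*} [Category A] [Abelian A] (P : ObjectProperty A) [P.IsSerreClass]

lemma prop_of_monoModSerre {X Y : A} (g : X ⟶ Y) (hg : P.monoModSerre g) (hY : P Y) : P X :=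
  P.prop_X₂_of_exact (ShortComplex.exact_kernel g) hg hY

lemma prop_of_epiModSerre {X Y : A} (g : X ⟶ Y) (hg : P.epiModSerre g) (hX : P X) : P Y :=
  P.prop_X₂_of_exact (ShortComplex.exact_cokernel g) hX hg

lemma factorsThruClass_of_comp_of_monoModSerre {X M N : A} {f : M ⟶ N} (hf : P.monoModSerre f)
    {u : X ⟶ M} (hu : FactorsThruClass P (u ≫ f)) : FactorsThruClass P u := by
  obtain ⟨Z, a, b, hZ, hab⟩ := hu
  refine ⟨pullback f b, pullback.lift u a hab.symm, pullback.fst f b, ?_,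
    pullback.lift_fst _ _ _⟩
  exact P.prop_of_monoModSerre _ (P.monoModSerre.pullback_snd f b hf) hZ

lemma factorsThruClass_of_comp_of_epiModSerre {X M N : A} {f : M ⟶ N} (hf : P.epiModSerre f)
    {u : N ⟶ X} (hu : FactorsThruClass P (f ≫ u)) : FactorsThruClass P u := by
  obtain ⟨Z, a, b, hZ, hab⟩ := hu
  refine ⟨pushout f a, pushout.inl f a, pushout.desc u b hab.symm, ?_, pushout.inl_desc _ _ _⟩
  exact P.prop_of_epiModSerre _ (P.epiModSerre.pushout_inr f a hf) hZ

theorem mono_functor_map_iff_monoModSerre {M N : A} (f : M ⟶ N) :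
    Mono ((Quotient.functor (stableRel P)).map f) ↔ P.monoModSerre f := by
  rw [mono_functor_map_iff]
  refine ⟨fun H ↦ P.prop_of_mono_of_factorsThruClass (kernel.ι f) (H _ ?_),
    fun hf _ _ ↦ P.factorsThruClass_of_comp_of_monoModSerre hf⟩
  simpa only [kernel.condition] using P.factorsThruClass_zero

theorem epi_functor_map_iff_epiModSerre {M N : A} (f : M ⟶ N) :
    Epi ((Quotient.functor (stableRel P)).map f) ↔ P.epiModSerre f := by
  rw [epi_functor_map_iff]
  refine ⟨fun H ↦ P.prop_of_epi_of_factorsThruClass (cokernel.π f) (H _ ?_),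
    fun hf _ _ ↦ P.factorsThruClass_of_comp_of_epiModSerre hf⟩
  simpa only [cokernel.condition] using P.factorsThruClass_zero

end Abelian

lemma isSerreClass_of_shortExact_iff {A : Type*} [Category A] [Abelian A] (T : A → Prop)
    (hzero : ∀ Z : A, IsZero Z → T Z)
    (hSerre : ∀ (S : ShortComplex A), S.ShortExact → (T S.X₂ ↔ (T S.X₁ ∧ T S.X₃))) :
    IsSerreClass T where
  exists_zero := ⟨0, isZero_zero A, hzero _ (isZero_zero A)⟩
  prop_of_mono i _ hY := ((hSerre _ { exact := ShortComplex.exact_cokernel i }).1 hY).1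
  prop_of_epi p _ hX := ((hSerre _ { exact := ShortComplex.exact_kernel p }).1 hX).2
  prop_X₂_of_shortExact hS h₁ h₃ := (hSerre _ hS).2 ⟨h₁, h₃⟩

end CategoryTheory.ObjectProperty

theorem stmt_15 {A : Type*} [Category A] [Abelian A] (T : A → Prop)
    (hzero : ∀ Z : A, IsZero Z → T Z)
    (hSerre : ∀ (S : ShortComplex A), S.ShortExact → (T S.X₂ ↔ (T S.X₁ ∧ T S.X₃)))
    {M N : A} (f : M ⟶ N) :
    (Mono ((Quotient.functor (stableRel T)).map f) ↔ T (kernel f)) ∧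
    (Epi ((Quotient.functor (stableRel T)).map f) ↔ T (cokernel f)) := by
  have := ObjectProperty.isSerreClass_of_shortExact_iff T hzero hSerre
  exact ⟨ObjectProperty.mono_functor_map_iff_monoModSerre T f,
    ObjectProperty.epi_functor_map_iff_epiModSerre T f⟩
end

section
/- Let A be an abelian category, T a full subcategory of projective objects closed under finite direct sums and direct summands, and A̅ = A/⟨T⟩ the stable category. If f : M → N is an epimorphism in A, then the image of f in A̅ is a monomorphism if and only if the kernel morphism ker(f) → M factors through an object of T. -/
/-!
The class of `f` is a monomorphism in `A/⟨T⟩` iff every `g` with `g ≫ f` factoring through `T`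
already factors through `T`. Taking `g = kernel.ι f` (where `g ≫ f = 0`) gives one direction.
Conversely, if `g ≫ f = u ≫ v` with `v` out of a projective object of `T`, lift `v` along the
epimorphism `f` to `w`; then `g - u ≫ w` factors through `kernel f`, hence through `T`.
-/

open CategoryTheory CategoryTheory.Limits ZeroObject

namespace FactorsThruClass

variable {A : Type*} [Category A] {T : A → Prop}

lemma comp_left {X Y W : A} {g : X ⟶ Y} (hg : FactorsThruClass T g) (h : W ⟶ X) :
    FactorsThruClass T (h ≫ g) := by
  obtain ⟨Z, a, b, hZ, rfl⟩ := hg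
  exact ⟨Z, h ≫ a, b, hZ, Category.assoc _ _ _⟩

lemma comp_right {X Y W : A} {g : X ⟶ Y} (hg : FactorsThruClass T g) (h : Y ⟶ W) :
    FactorsThruClass T (g ≫ h) := by
  obtain ⟨Z, a, b, hZ, rfl⟩ := hg
  exact ⟨Z, a, b ≫ h, hZ, (Category.assoc _ _ _).symm⟩

lemma zero [HasZeroMorphisms A] [HasZeroObject A] (hzero : ∀ Z : A, IsZero Z → T Z)
    (X Y : A) : FactorsThruClass T (0 : X ⟶ Y) :=
  ⟨0, 0, 0, hzero _ (isZero_zero A), zero_comp⟩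

lemma neg [Preadditive A] {X Y : A} {g : X ⟶ Y} (hg : FactorsThruClass T g) :
    FactorsThruClass T (-g) := by
  obtain ⟨Z, a, b, hZ, rfl⟩ := hg
  exact ⟨Z, -a, b, hZ, Preadditive.neg_comp _ _⟩

lemma add [Preadditive A] [HasBinaryBiproducts A] (hsum : ∀ X Y : A, T X → T Y → T (X ⊞ Y))
    {X Y : A} {f g : X ⟶ Y} (hf : FactorsThruClass T f) (hg : FactorsThruClass T g) :
    FactorsThruClass T (f + g) := by
  obtain ⟨Z, a, b, hZ, rfl⟩ := hf
  obtain ⟨W, c, d, hW, rfl⟩ := hg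
  exact ⟨Z ⊞ W, biprod.lift a c, biprod.desc b d, hsum _ _ hZ hW, by simp⟩

end FactorsThruClass

lemma congruence_stableRel {A : Type*} [Category A] [Preadditive A] [HasBinaryBiproducts A]
    [HasZeroObject A] {T : A → Prop} (hzero : ∀ Z : A, IsZero Z → T Z)
    (hsum : ∀ X Y : A, T X → T Y → T (X ⊞ Y)) :
    Congruence (stableRel T) where
  equivalence :=
    { refl := fun f => by simpa [stableRel] using FactorsThruClass.zero hzero _ _
      symm := fun {f g} h => by simpa [stableRel] using h.neg
      trans := fun {f g k} hfg hgk => by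
        simpa [stableRel] using FactorsThruClass.add hsum hfg hgk }
  comp_left f g g' h := by simpa [stableRel, Preadditive.comp_sub] using h.comp_left f
  comp_right g h := by simpa [stableRel, Preadditive.sub_comp] using h.comp_right g

lemma stableRel_mono_map_iff {A : Type*} [Category A] [Preadditive A] {T : A → Prop}
    [Congruence (stableRel T)] {M N : A} (f : M ⟶ N) :
    Mono ((Quotient.functor (stableRel T)).map f) ↔
      ∀ {X : A} (g : X ⟶ M), FactorsThruClass T (g ≫ f) → FactorsThruClass T g := by
  let Q := Quotient.functor (stableRel T)
  have map_eq_iff {X Y : A} (g h : X ⟶ Y) : Q.map g = Q.map h ↔ FactorsThruClass T (g - h) :=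
    Quotient.functor_map_eq_iff _ _ _
  constructor
  · intro hmono X g hg
    have hgf : Q.map g ≫ Q.map f = Q.map 0 ≫ Q.map f := by
      rw [← Q.map_comp, ← Q.map_comp, map_eq_iff, zero_comp, sub_zero]
      exact hg
    simpa using (map_eq_iff g 0).mp (hmono.right_cancellation _ _ hgf)
  · refine fun hf => ⟨fun {X} g h hgh => ?_⟩
    obtain ⟨g, rfl⟩ := Q.map_surjective g
    obtain ⟨h, rfl⟩ := Q.map_surjective h
    rw [← Q.map_comp, ← Q.map_comp, map_eq_iff, ← Preadditive.sub_comp] at hgh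
    exact (map_eq_iff g h).mpr (hf _ hgh)

lemma FactorsThruClass.of_comp_epi {A : Type*} [Category A] [Preadditive A]
    [HasBinaryBiproducts A] {T : A → Prop} (hproj : ∀ X : A, T X → Projective X)
    (hsum : ∀ X Y : A, T X → T Y → T (X ⊞ Y)) {M N : A} (f : M ⟶ N) [Epi f] [HasKernel f]
    (hker : FactorsThruClass T (kernel.ι f)) {X : A} (g : X ⟶ M)
    (hg : FactorsThruClass T (g ≫ f)) : FactorsThruClass T g := by
  obtain ⟨W, u, v, hW, huv⟩ := hg
  have : Projective W := hproj W hW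
  obtain ⟨w, hw⟩ := Projective.factors v f
  have hker_comp : (g - u ≫ w) ≫ f = 0 := by
    rw [Preadditive.sub_comp, Category.assoc, hw, huv, sub_self]
  have hdecomp : g = kernel.lift f _ hker_comp ≫ kernel.ι f + u ≫ w := by
    rw [kernel.lift_ι, sub_add_cancel]
  rw [hdecomp]
  exact add hsum (hker.comp_left _) ⟨W, u, w, hW, rfl⟩

theorem stmt_16_general {A : Type*} [Category A] [Abelian A] (T : A → Prop)
    (hproj : ∀ X : A, T X → Projective X)
    (hzero : ∀ Z : A, IsZero Z → T Z)
    (hsum : ∀ X Y : A, T X → T Y → T (X ⊞ Y))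
    {M N : A} (f : M ⟶ N) (hf : Epi f) :
    Mono ((Quotient.functor (stableRel T)).map f) ↔
      FactorsThruClass T (kernel.ι f) := by
  have := congruence_stableRel hzero hsum
  rw [stableRel_mono_map_iff]
  refine ⟨fun hmono => hmono _ ?_, fun hker _ g => FactorsThruClass.of_comp_epi hproj hsum f hker g⟩
  rw [kernel.condition]
  exact FactorsThruClass.zero hzero _ _

theorem stmt_16 {A : Type*} [Category A] [Abelian A] (T : A → Prop)
    (hproj : ∀ X : A, T X → Projective X)
    (hzero : ∀ Z : A, IsZero Z → T Z)
    (hsum : ∀ X Y : A, T X → T Y → T (X ⊞ Y))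
    (hsummand : ∀ X Z : A, T Z → (∃ (i : X ⟶ Z) (r : Z ⟶ X), i ≫ r = 𝟙 X) → T X)
    {M N : A} (f : M ⟶ N) (hf : Epi f) :
    Mono ((Quotient.functor (stableRel T)).map f) ↔
      FactorsThruClass T (kernel.ι f) :=
  stmt_16_general T hproj hzero hsum f hf
end

section
/- Let A be a ring and I an idempotent two-sided ideal of A (I² = I). Let Y be the full subcategory of Mod A consisting of modules M with MI = 0, and X the full subcategory of modules M with MI = M. Then X = ⟂Y (the modules M with Hom_A(M, Y) = 0 for all Y ∈ Y), X coincides with the class of modules generated by I (quotients of coproducts of copies of I), and Y coincides with the class of modules generated by A/I. -/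
/-!
Write `I • ⊤` for `IM`. Surjections carry `IM` onto `IN`, so the class `IM = M` and the class
`IM = 0` are both closed under quotients, and both are closed under direct sums. Idempotency
gives `I • I = I`, so `I` itself lies in the first class; two-sidedness makes `I` kill `A ⧸ I`, so
`A ⧸ I` lies in the second. Conversely, if `IM = M` then the maps `I → M`, `a ↦ a • m`, jointly
cover `M`; if `IM = 0` then the maps `A ⧸ I → M`, `[r] ↦ r • m`, are well defined and cover `M`.
Finally `M → M ⧸ IM` is a map to a module killed by `I`, and it vanishes only when `IM = M`.
-/

universe u

/-- The submodule `I·M` of a module `M`, generated by all products `a • m` with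
`a ∈ I`. -/
def idealSmulTop {A : Type u} [Ring A] (I : Ideal A)
    (M : Type u) [AddCommGroup M] [Module A M] : Submodule A M :=
  Submodule.span A {x : M | ∃ a ∈ I, ∃ m : M, x = a • m}

universe v

open Submodule

theorem idealSmulTop_eq_smul_top {A : Type u} [Ring A] (I : Ideal A)
    (M : Type u) [AddCommGroup M] [Module A M] : idealSmulTop I M = I • ⊤ := by
  refine le_antisymm (span_le.2 ?_) (smul_le.2 fun a ha m _ => subset_span ⟨a, ha, m, rfl⟩)
  rintro _ ⟨a, ha, m, rfl⟩
  exact smul_mem_smul ha mem_top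

namespace Submodule

section Semiring

variable {A : Type*} [Semiring A] (I : Ideal A)
variable {M N : Type*} [AddCommMonoid M] [Module A M] [AddCommMonoid N] [Module A N]

theorem smul_top_eq_bot_iff : I • (⊤ : Submodule A M) = ⊥ ↔ ∀ a ∈ I, ∀ m : M, a • m = 0 := by
  simp only [eq_bot_iff, smul_le, mem_top, mem_bot, forall_const]

theorem map_smul_top_le (f : M →ₗ[A] N) : (I • ⊤ : Submodule A M).map f ≤ I • ⊤ := by
  rw [map_smul'']
  exact smul_mono_right _ le_top

theorem map_smul_top_of_surjective {f : M →ₗ[A] N} (hf : Function.Surjective f) :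
    (I • ⊤ : Submodule A M).map f = I • ⊤ := by
  rw [map_smul'', map_top, LinearMap.range_eq_top.2 hf]

theorem smul_top_eq_top_of_surjective {f : M →ₗ[A] N} (hf : Function.Surjective f)
    (h : I • (⊤ : Submodule A M) = ⊤) : I • (⊤ : Submodule A N) = ⊤ := by
  rw [← map_smul_top_of_surjective I hf, h, map_top, LinearMap.range_eq_top.2 hf]

theorem smul_top_eq_bot_of_surjective {f : M →ₗ[A] N} (hf : Function.Surjective f)
    (h : I • (⊤ : Submodule A M) = ⊥) : I • (⊤ : Submodule A N) = ⊥ := by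
  rw [← map_smul_top_of_surjective I hf, h, map_bot]

theorem linearMap_eq_zero_of_smul_top_eq_top {f : M →ₗ[A] N}
    (hM : I • (⊤ : Submodule A M) = ⊤) (hN : I • (⊤ : Submodule A N) = ⊥) : f = 0 := by
  rw [← LinearMap.range_eq_bot, LinearMap.range_eq_map, eq_bot_iff, ← hN, ← hM]
  exact map_smul_top_le I f

theorem smul_top_finsupp_eq_iSup (S : Type*) :
    I • (⊤ : Submodule A (S →₀ M)) = ⨆ s, (I • ⊤ : Submodule A M).map (Finsupp.lsingle s) := by
  simp_rw [← Finsupp.iSup_lsingle_range, smul_iSup, LinearMap.range_eq_map, map_smul'']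

theorem smul_top_finsupp_eq_top {S : Type*} (h : I • (⊤ : Submodule A M) = ⊤) :
    I • (⊤ : Submodule A (S →₀ M)) = ⊤ := by
  simp_rw [smul_top_finsupp_eq_iSup, h, map_top, Finsupp.iSup_lsingle_range]

theorem smul_top_finsupp_eq_bot {S : Type*} (h : I • (⊤ : Submodule A M) = ⊥) :
    I • (⊤ : Submodule A (S →₀ M)) = ⊥ := by
  simp_rw [smul_top_finsupp_eq_iSup, h, map_bot, iSup_bot]

theorem smul_top_eq_top_of_le_mul_self (h : I ≤ I * I) : I • (⊤ : Submodule A I) = ⊤ :=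
  eq_top_iff.2 fun x _ => (mem_smul_top_iff I _ x).2 (h x.2)

theorem exists_surjective_finsupp_ideal_of_smul_top_eq_top (h : I • (⊤ : Submodule A M) = ⊤) :
    ∃ f : (M →₀ I) →ₗ[A] M, Function.Surjective f := by
  refine ⟨Finsupp.lsum ℕ fun m => LinearMap.toSpanSingleton A M m ∘ₗ I.subtype, ?_⟩
  rw [← LinearMap.range_eq_top, eq_top_iff, ← h, smul_le]
  intro a ha m _
  exact ⟨Finsupp.single m ⟨a, ha⟩, by simp⟩

end Semiring

section Ring

variable {A : Type*} [Ring A] (I : Ideal A) {M : Type v} [AddCommGroup M] [Module A M]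

theorem smul_top_quotient_smul_top_eq_bot :
    I • (⊤ : Submodule A (M ⧸ I • (⊤ : Submodule A M))) = ⊥ := by
  rw [← map_smul_top_of_surjective I (mkQ_surjective _), mkQ_map_self]

theorem smul_top_eq_top_iff_forall_linearMap_eq_zero :
    I • (⊤ : Submodule A M) = ⊤ ↔ ∀ (N : Type v) [AddCommGroup N] [Module A N],
      I • (⊤ : Submodule A N) = ⊥ → ∀ f : M →ₗ[A] N, f = 0 := by
  refine ⟨fun hM N _ _ hN f => linearMap_eq_zero_of_smul_top_eq_top I hM hN, fun h => ?_⟩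
  simpa using congrArg LinearMap.ker
    (h _ (smul_top_quotient_smul_top_eq_bot I) (I • (⊤ : Submodule A M)).mkQ)

theorem smul_top_ideal_quotient_eq_bot (h : ∀ a ∈ I, ∀ r : A, a * r ∈ I) :
    I • (⊤ : Submodule A (A ⧸ I)) = ⊥ := by
  refine (smul_top_eq_bot_iff I).2 fun a ha q => ?_
  induction q using Submodule.Quotient.induction_on with
  | _ r => rw [← Quotient.mk_smul, Quotient.mk_eq_zero]; exact h a ha r

theorem exists_surjective_finsupp_quotient_of_smul_top_eq_bot
    (h : I • (⊤ : Submodule A M) = ⊥) : ∃ f : (M →₀ A ⧸ I) →ₗ[A] M, Function.Surjective f := by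
  have hker (m : M) : I ≤ LinearMap.ker (LinearMap.toSpanSingleton A M m) :=
    fun a ha => (smul_top_eq_bot_iff I).1 h a ha m
  refine ⟨Finsupp.lsum ℕ fun m => I.liftQ (LinearMap.toSpanSingleton A M m) (hker m), fun m => ?_⟩
  exact ⟨Finsupp.single m (Quotient.mk 1), by simp⟩

end Ring

end Submodule

theorem stmt_18 {A : Type u} [Ring A] (I : Ideal A)
    (htwosided : ∀ a ∈ I, ∀ r : A, a * r ∈ I)
    (hidem : ∀ a ∈ I, a ∈ Submodule.span A {x : A | ∃ b ∈ I, ∃ c ∈ I, x = b * c}) :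
    (∀ (M : Type u) [AddCommGroup M] [Module A M],
        idealSmulTop I M = ⊤ ↔
          ∀ (N : Type u) [AddCommGroup N] [Module A N],
            idealSmulTop I N = ⊥ → ∀ f : M →ₗ[A] N, f = 0) ∧
    (∀ (M : Type u) [AddCommGroup M] [Module A M],
        idealSmulTop I M = ⊤ ↔
          ∃ (S : Type u) (f : (S →₀ ↥I) →ₗ[A] M), Function.Surjective f) ∧
    (∀ (M : Type u) [AddCommGroup M] [Module A M],
        idealSmulTop I M = ⊥ ↔
          ∃ (S : Type u) (f : (S →₀ (A ⧸ I)) →ₗ[A] M), Function.Surjective f) := by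
  have hII : I ≤ I * I := fun a ha =>
    span_le.2 (by rintro _ ⟨b, hb, c, hc, rfl⟩; exact Ideal.mul_mem_mul hb hc) (hidem a ha)
  simp only [idealSmulTop_eq_smul_top]
  refine ⟨fun M _ _ => smul_top_eq_top_iff_forall_linearMap_eq_zero I,
    fun M _ _ => ⟨fun h => ⟨M, exists_surjective_finsupp_ideal_of_smul_top_eq_top I h⟩, ?_⟩,
    fun M _ _ => ⟨fun h => ⟨M, exists_surjective_finsupp_quotient_of_smul_top_eq_bot I h⟩, ?_⟩⟩
  · rintro ⟨S, f, hf⟩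
    exact smul_top_eq_top_of_surjective I hf
      (smul_top_finsupp_eq_top I (smul_top_eq_top_of_le_mul_self I hII))
  · rintro ⟨S, f, hf⟩
    exact smul_top_eq_bot_of_surjective I hf
      (smul_top_finsupp_eq_bot I (smul_top_ideal_quotient_eq_bot I htwosided))
end

section
/- Let A be a ring, (X, Y, Z) a TTF triple on Mod A (i.e., (X, Y) and (Y, Z) are torsion pairs), with associated idempotent ideal I = τ_X(A). If the torsion pair (Y, Z) is split (every module decomposes as its Y-torsion part direct sum a Z-module), then the torsion pair (X, Y) is hereditary, i.e., X is closed under submodules. -/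
open CategoryTheory

universe u

/-- A torsion pair `(X, Y)` on the category of `A`-modules: both classes are
closed under isomorphism, `Hom(X, Y) = 0`, and every module `M` has a submodule
`t` with `t ∈ X` and `M/t ∈ Y`. -/
def IsModuleTorsionPair {A : Type u} [Ring A]
    (X Y : ModuleCat.{u} A → Prop) : Prop :=
  (∀ {M N : ModuleCat.{u} A}, (M ≅ N) → X M → X N) ∧
  (∀ {M N : ModuleCat.{u} A}, (M ≅ N) → Y M → Y N) ∧
  (∀ {M N : ModuleCat.{u} A}, X M → Y N → ∀ f : M ⟶ N, f = 0) ∧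
  (∀ M : ModuleCat.{u} A, ∃ t : Submodule A M,
    X (ModuleCat.of A t) ∧ Y (ModuleCat.of A (M ⧸ t)))

/-!
Let `M ∈ X`, `N ≤ M`, and let `t = τ_X(N)`, so that `N/t ∈ Y`. In `P = M/t` the image of `N`
is a copy of `N/t`, a `Y`-module, hence it lies in the `Y`-torsion part `s` of `P`, since
`Hom(Y, Z) = 0`. As `(Y, Z)` splits, `s` is a retract of `P`, a quotient of the `X`-module `M`;
the retraction is then a map from `X` to `Y` and vanishes, so `s = 0`. Hence `N/t = 0`,
i.e. `N = t ∈ X`.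
-/

namespace IsModuleTorsionPair

variable {A : Type u} [Ring A] {X Y : ModuleCat.{u} A → Prop}

theorem left_of_linearEquiv (h : IsModuleTorsionPair X Y) {M N : Type u}
    [AddCommGroup M] [Module A M] [AddCommGroup N] [Module A N] (e : M ≃ₗ[A] N)
    (hM : X (ModuleCat.of A M)) : X (ModuleCat.of A N) :=
  h.1 e.toModuleIso hM

theorem right_of_linearEquiv (h : IsModuleTorsionPair X Y) {M N : Type u}
    [AddCommGroup M] [Module A M] [AddCommGroup N] [Module A N] (e : M ≃ₗ[A] N)
    (hM : Y (ModuleCat.of A M)) : Y (ModuleCat.of A N) :=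
  h.2.1 e.toModuleIso hM

theorem linearMap_eq_zero (h : IsModuleTorsionPair X Y) {M N : Type u}
    [AddCommGroup M] [Module A M] [AddCommGroup N] [Module A N]
    (hM : X (ModuleCat.of A M)) (hN : Y (ModuleCat.of A N)) (f : M →ₗ[A] N) : f = 0 := by
  simpa using congrArg ModuleCat.Hom.hom (h.2.2.1 hM hN (ModuleCat.ofHom f))

theorem le_of_left_of_right_quotient (h : IsModuleTorsionPair X Y) {P : Type u}
    [AddCommGroup P] [Module A P] {L s : Submodule A P}
    (hL : X (ModuleCat.of A L)) (hs : Y (ModuleCat.of A (P ⧸ s))) : L ≤ s := by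
  intro x hx
  have := LinearMap.congr_fun (h.linearMap_eq_zero hL hs (s.mkQ ∘ₗ L.subtype)) ⟨x, hx⟩
  simpa using this

theorem eq_bot_of_retract_of_surjective (h : IsModuleTorsionPair X Y) {M P : Type u}
    [AddCommGroup M] [Module A M] [AddCommGroup P] [Module A P]
    {f : M →ₗ[A] P} (hf : Function.Surjective f) (hM : X (ModuleCat.of A M))
    {s : Submodule A P} (hs : Y (ModuleCat.of A s)) (r : P →ₗ[A] s) (hr : ∀ x : s, r x = x) :
    s = ⊥ := by
  have hr0 : r = 0 :=
    (LinearMap.cancel_right hf).1 <| by rw [h.linearMap_eq_zero hM hs (r ∘ₗ f), LinearMap.zero_comp]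
  refine (Submodule.eq_bot_iff s).2 fun x hx => ?_
  simpa [hr0] using (hr ⟨x, hx⟩).symm

end IsModuleTorsionPair

theorem stmt_19 {A : Type u} [Ring A] (X Y Z : ModuleCat.{u} A → Prop)
    (hXY : IsModuleTorsionPair X Y) (hYZ : IsModuleTorsionPair Y Z)
    (hsplit : ∀ M : ModuleCat.{u} A, ∃ t : Submodule A M,
      Y (ModuleCat.of A t) ∧ Z (ModuleCat.of A (M ⧸ t)) ∧
        ∃ r : M →ₗ[A] t, ∀ x : t, r x = x) :
    ∀ (M : ModuleCat.{u} A), X M → ∀ N : Submodule A M, X (ModuleCat.of A N) := by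
  intro M hM N
  obtain ⟨t, htX, htY⟩ := hXY.2.2.2 (ModuleCat.of A N)
  let K : Submodule A M := t.map N.subtype
  let g : N →ₗ[A] M ⧸ K := K.mkQ ∘ₗ N.subtype
  have hker : LinearMap.ker g = t := by
    rw [LinearMap.ker_comp, Submodule.ker_mkQ,
      Submodule.comap_map_eq_of_injective N.injective_subtype]
  have hrange : Y (ModuleCat.of A (LinearMap.range g)) :=
    hXY.right_of_linearEquiv
      ((Submodule.quotEquivOfEq _ _ hker.symm).trans g.quotKerEquivRange) htY
  obtain ⟨s, hsY, hsZ, r, hr⟩ := hsplit (ModuleCat.of A (M ⧸ K))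
  have hs : s = ⊥ := hXY.eq_bot_of_retract_of_surjective K.mkQ_surjective hM hsY r hr
  have hg : g = 0 :=
    LinearMap.range_eq_bot.1 <| le_bot_iff.1 <| hs ▸ hYZ.le_of_left_of_right_quotient hrange hsZ
  have htop : t = ⊤ := by rw [← hker, hg, LinearMap.ker_zero]
  exact hXY.left_of_linearEquiv (LinearEquiv.ofTop t htop) htX
end
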